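/- Let p(t) be a real polynomial with p(t) = 1 - β t + (higher order terms), whose coefficient sequence has exactly d sign changes, and suppose (1-t)^d divides p(t), say p(t) = (1-t)^d q(t). Then β ≤ d. -/

import Mathlib

open scoped Classical

/-- The number of sign changes in the sequence of nonzero coefficients of a real polynomial. -/
noncomputable def signChanges (p : Polynomial ℝ) : ℕ :=
  let l := ((List.range (p.natDegree + 1)).map p.coeff).filter (fun a => a ≠ 0)
  ((l.zip l.tail).filter (fun ab => ab.1 * ab.2 < 0)).length

/-!
Multiplying a nonzero polynomial by `η - t` with `η > 0` adds at least one sign change (the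
inductive step of Descartes' rule of signs, in Mathlib for `Polynomial.signVariations`, which
counts the same thing as `signChanges`). Hence if `p = (1 - t)^d q` has `d` sign changes, `q` has
none. But `q(t) = 1 + (d - β) t + ⋯`, so `d - β ≥ 0`.
-/

namespace List

variable {α β : Type*}

def countAdjacent (r : α → α → Prop) [DecidableRel r] (l : List α) : ℕ :=
  ((l.zip l.tail).filter fun ab => r ab.1 ab.2).length

section countAdjacent

variable (r : α → α → Prop) [DecidableRel r]

@[simp]
theorem countAdjacent_nil : countAdjacent r [] = 0 := rfl

@[simp]
theorem countAdjacent_singleton (a : α) : countAdjacent r [a] = 0 := rfl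

theorem countAdjacent_cons_cons (a b : α) (l : List α) :
    countAdjacent r (a :: b :: l) = countAdjacent r (b :: l) + if r a b then 1 else 0 := by
  by_cases h : r a b <;> simp [countAdjacent, h]

theorem countAdjacent_append_pair (l : List α) (a b : α) :
    countAdjacent r (l ++ [a, b]) = countAdjacent r (l ++ [a]) + if r a b then 1 else 0 := by
  induction l with
  | nil => simp [countAdjacent_cons_cons]
  | cons x l ih =>
    cases l with
    | nil => simp [countAdjacent_cons_cons, add_comm]
    | cons y l =>
      simp only [cons_append, countAdjacent_cons_cons] at ih ⊢
      rw [ih]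
      omega

theorem countAdjacent_reverse [Std.Symm r] (l : List α) :
    countAdjacent r l.reverse = countAdjacent r l := by
  cases l with
  | nil => rfl
  | cons a l =>
    induction l generalizing a with
    | nil => simp
    | cons b l ih =>
      rw [reverse_cons, reverse_cons, append_assoc, singleton_append, countAdjacent_append_pair,
        ← reverse_cons, ih, countAdjacent_cons_cons]
      simp only [Std.Symm.iff (r := r) b a]

theorem countAdjacent_map (f : β → α) (l : List β) :
    countAdjacent r (l.map f) = countAdjacent (fun a b => r (f a) (f b)) l := by
  simp [countAdjacent, ← map_tail, zip_map, filter_map, Function.comp_def]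

theorem countAdjacent_congr {s : α → α → Prop} [DecidableRel s] {l : List α}
    (h : ∀ a ∈ l, ∀ b ∈ l, r a b ↔ s a b) : countAdjacent r l = countAdjacent s l := by
  unfold countAdjacent
  congr 1
  refine filter_congr fun ab hab => ?_
  have hmem := of_mem_zip hab
  simp [h _ hmem.1 _ (mem_of_mem_tail hmem.2)]

end countAdjacent

theorem length_destutter'_ne [DecidableEq α] (a : α) (l : List α) :
    (l.destutter' (· ≠ ·) a).length = countAdjacent (· ≠ ·) (a :: l) + 1 := by
  induction l generalizing a with
  | nil => simp
  | cons b l ih =>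
    rw [destutter'_cons, countAdjacent_cons_cons]
    by_cases h : a = b
    · subst h
      simp [ih]
    · simp [h, ih]

theorem length_destutter_ne_sub_one [DecidableEq α] (l : List α) :
    (l.destutter (· ≠ ·)).length - 1 = countAdjacent (· ≠ ·) l := by
  cases l with
  | nil => simp
  | cons a l => simp [destutter_cons', length_destutter'_ne]

end List

theorem sign_ne_sign_iff_mul_neg {R : Type*} [Ring R] [LinearOrder R] [IsStrictOrderedRing R]
    {a b : R} (ha : a ≠ 0) (hb : b ≠ 0) : SignType.sign a ≠ SignType.sign b ↔ a * b < 0 := by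
  rcases ha.lt_or_gt with ha | ha <;> rcases hb.lt_or_gt with hb | hb <;>
    simp [sign_neg, sign_pos, ha, hb, mul_pos_of_neg_of_neg, mul_neg_of_pos_of_neg,
      mul_neg_of_neg_of_pos, le_of_lt]

namespace Polynomial

theorem signChanges_eq_countAdjacent (p : ℝ[X]) :
    signChanges p =
      ((List.range (p.natDegree + 1)).map p.coeff |>.filter (· ≠ 0)).countAdjacent (· * · < 0) :=
  rfl

-- Mathlib reads the coefficients from the leading one down and counts blocks of equal signs.
theorem signChanges_eq_signVariations (p : ℝ[X]) : signChanges p = p.signVariations := by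
  by_cases hp : p = 0
  · simp [signChanges, hp]
  set L := (List.range (p.natDegree + 1)).map p.coeff |>.filter (· ≠ 0) with hL
  have hcoeffList : p.coeffList = ((List.range (p.natDegree + 1)).map p.coeff).reverse := by
    rw [coeffList, degree_eq_natDegree hp, List.map_reverse]
    rfl
  have hsigns : (p.coeffList.map SignType.sign).filter (· ≠ 0) = L.reverse.map SignType.sign := by
    rw [hcoeffList, List.filter_map, List.filter_reverse, List.map_reverse, List.map_reverse, hL]
    congr 3
    ext x
    simp
  have hL0 : ∀ x ∈ L.reverse, x ≠ 0 := by simp [hL]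
  have : Std.Symm fun a b : ℝ => a * b < 0 := ⟨fun a b h => by rwa [mul_comm]⟩
  rw [signVariations, hsigns, List.length_destutter_ne_sub_one, List.countAdjacent_map,
    signChanges_eq_countAdjacent, ← hL, ← List.countAdjacent_reverse _ L]
  exact List.countAdjacent_congr _ fun a ha b hb =>
    (sign_ne_sign_iff_mul_neg (hL0 a ha) (hL0 b hb)).symm

theorem one_le_signChanges_of_coeff_zero_mul_coeff_one_neg {p : ℝ[X]}
    (h : p.coeff 0 * p.coeff 1 < 0) : 1 ≤ signChanges p := by
  have h0 : p.coeff 0 ≠ 0 := left_ne_zero_of_mul h.ne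
  have h1 : p.coeff 1 ≠ 0 := right_ne_zero_of_mul h.ne
  obtain ⟨n, hn⟩ : ∃ n, p.natDegree = n + 1 := ⟨p.natDegree - 1, by
    have := le_natDegree_of_ne_zero h1; omega⟩
  rw [signChanges_eq_countAdjacent, hn, List.range_succ_eq_map, List.range_succ_eq_map]
  simp [h0, h1, h, List.countAdjacent_cons_cons]

section StrictOrderedRing

variable {R : Type*} [Ring R] [LinearOrder R] [IsStrictOrderedRing R] {P : R[X]} {η : R}

theorem succ_signVariations_le_C_sub_X_mul (hη : 0 < η) (hP : P ≠ 0) :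
    P.signVariations + 1 ≤ ((C η - X) * P).signVariations := by
  rw [← neg_sub, neg_mul, signVariations_neg]
  exact succ_signVariations_le_X_sub_C_mul hη hP

theorem signVariations_add_le_C_sub_X_pow_mul (hη : 0 < η) (hP : P ≠ 0) (d : ℕ) :
    P.signVariations + d ≤ ((C η - X) ^ d * P).signVariations := by
  induction d with
  | zero => simp
  | succ d ih =>
    have hne : (C η - X) ^ d * P ≠ 0 :=
      mul_ne_zero (pow_ne_zero _ (neg_sub X (C η) ▸ neg_ne_zero.mpr (X_sub_C_ne_zero η))) hP
    have := succ_signVariations_le_C_sub_X_mul hη hne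
    rw [pow_succ', mul_assoc]
    omega

end StrictOrderedRing

section CommRing

variable {R : Type*} [CommRing R]

theorem coeff_zero_one_sub_X_pow (d : ℕ) : ((1 - X : R[X]) ^ d).coeff 0 = 1 := by
  simp [coeff_zero_eq_eval_zero]

theorem coeff_zero_one_sub_X_pow_mul (d : ℕ) (q : R[X]) :
    ((1 - X) ^ d * q).coeff 0 = q.coeff 0 := by
  rw [mul_coeff_zero, coeff_zero_one_sub_X_pow, one_mul]

theorem coeff_one_one_sub_X_pow (d : ℕ) : ((1 - X : R[X]) ^ d).coeff 1 = -d := by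
  induction d with
  | zero => simp [coeff_one]
  | succ d ih =>
    rw [pow_succ, mul_coeff_one, ih, coeff_zero_one_sub_X_pow]
    simp [coeff_one]

theorem coeff_one_one_sub_X_pow_mul (d : ℕ) (q : R[X]) :
    ((1 - X) ^ d * q).coeff 1 = q.coeff 1 - d * q.coeff 0 := by
  rw [mul_coeff_one, coeff_one_one_sub_X_pow, coeff_zero_one_sub_X_pow]
  ring

end CommRing

end Polynomial

/-- If `p(t) = 1 - β t + ⋯` has exactly `d` sign changes in its coefficient sequence and
`(1 - t)^d` divides `p(t)`, then `β ≤ d`. -/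
theorem generators_le_signChanges (p : Polynomial ℝ) (β : ℝ) (d : ℕ)
    (h0 : p.coeff 0 = 1) (h1 : p.coeff 1 = -β)
    (hsc : signChanges p = d)
    (hdvd : (1 - Polynomial.X) ^ d ∣ p) :
    β ≤ d := by
  obtain ⟨q, rfl⟩ := hdvd
  have hq : q ≠ 0 := by rintro rfl; simp at h0
  have hq0 : q.coeff 0 = 1 := by rwa [Polynomial.coeff_zero_one_sub_X_pow_mul] at h0
  have hq1 : q.coeff 1 = d - β := by
    rw [Polynomial.coeff_one_one_sub_X_pow_mul, hq0] at h1
    linarith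
  have hq_signChanges : signChanges q = 0 := by
    have := Polynomial.signVariations_add_le_C_sub_X_pow_mul one_pos hq d
    rw [map_one, ← Polynomial.signChanges_eq_signVariations,
      ← Polynomial.signChanges_eq_signVariations, hsc] at this
    omega
  have hq1_nonneg : 0 ≤ q.coeff 1 := by
    by_contra hneg
    have := Polynomial.one_le_signChanges_of_coeff_zero_mul_coeff_one_neg (p := q)
      (by rw [hq0]; linarith)
    omega
  linarith
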